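/- arXiv:2206.06622 — 2 statements merged into one kernel-verified Lean document; each statement's English description precedes it below -/
import Mathlib

section
/- Let f : ℝ^d → ℝ be a convex function and let C ⊆ ℝ^d be a compact set. Then for every ε > 0 there exist finitely many affine functions, i.e. vectors A_1, …, A_M ∈ ℝ^d and scalars b_1, …, b_M ∈ ℝ, such that the max-affine function g(x) = max_{1 ≤ i ≤ M} (⟨A_i, x⟩ + b_i) satisfies g(x) ≤ f(x) for all x ∈ C and sup_{x ∈ C} (f(x) − g(x)) ≤ ε. -/
/-- Existence of an exact affine minorant (subgradient cut) at any point for a convex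
function on `ℝ^d`. -/
lemma exists_affine_minorant {d : ℕ} (f : (Fin d → ℝ) → ℝ)
    (hf : ConvexOn ℝ Set.univ f) (x₀ : Fin d → ℝ) :
    ∃ (A : Fin d → ℝ) (b : ℝ),
      (∀ x, (∑ j, A j * x j) + b ≤ f x) ∧ (∑ j, A j * x₀ j) + b = f x₀ := by
  have hcont : Continuous f := hf.locallyLipschitz.continuous
  -- strict epigraph
  set S : Set ((Fin d → ℝ) × ℝ) := {p | f p.1 < p.2} with hS
  have hSconv : Convex ℝ S := by
    intro p hp q hq a b ha hb hab
    simp only [hS, Set.mem_setOf_eq] at hp hq ⊢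
    rcases eq_or_lt_of_le ha with h0 | h0
    · simp only [← h0, zero_smul, zero_add] at hab ⊢
      simpa [hab] using hq
    · have h1 : f (a • p.1 + b • q.1) ≤ a * f p.1 + b * f q.1 :=
        hf.2 (Set.mem_univ _) (Set.mem_univ _) ha hb hab
      have h2 : a * f p.1 + b * f q.1 < a * p.2 + b * q.2 := by
        have := mul_lt_mul_of_pos_left hp h0
        have := mul_le_mul_of_nonneg_left hq.le hb
        linarith
      calc f ((a • p + b • q).1) = f (a • p.1 + b • q.1) := rfl
        _ < a * p.2 + b * q.2 := lt_of_le_of_lt h1 h2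
        _ = (a • p + b • q).2 := rfl
  have hSopen : IsOpen S := by
    have : Continuous fun p : (Fin d → ℝ) × ℝ => f p.1 - p.2 :=
      (hcont.comp continuous_fst).sub continuous_snd
    have : IsOpen {p : (Fin d → ℝ) × ℝ | f p.1 - p.2 < 0} :=
      isOpen_lt this continuous_const
    convert this using 1
    ext p; simp [hS, sub_neg]
  have hx₀ : (x₀, f x₀) ∉ S := by simp [hS]
  obtain ⟨L, hL⟩ := geometric_hahn_banach_open_point hSconv hSopen hx₀
  set c : ℝ := L ((0 : Fin d → ℝ), (1 : ℝ)) with hc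
  have hdecomp : ∀ (x : Fin d → ℝ) (t : ℝ), L (x, t) = L (x, 0) + t * c := by
    intro x t
    have : (x, t) = ((x, (0:ℝ)) + t • ((0 : Fin d → ℝ), (1:ℝ))) := by
      simp [Prod.ext_iff]
    rw [this, map_add, map_smul, smul_eq_mul, hc]
  have hcneg : c < 0 := by
    have h1 : (x₀, f x₀ + 1) ∈ S := by simp [hS]
    have h2 := hL _ h1
    rw [hdecomp x₀ (f x₀ + 1), hdecomp x₀ (f x₀)] at h2
    linarith
  -- key inequality
  have hkey : ∀ x, L (x, 0) + f x * c ≤ L (x₀, 0) + f x₀ * c := by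
    intro x
    have hlim : Filter.Tendsto (fun s : ℝ => L (x, 0) + (f x + s) * c)
        (nhdsWithin 0 (Set.Ioi 0)) (nhds (L (x, 0) + f x * c)) := by
      have : Filter.Tendsto (fun s : ℝ => L (x, 0) + (f x + s) * c)
          (nhds 0) (nhds (L (x, 0) + (f x + 0) * c)) := by
        apply Filter.Tendsto.const_add
        exact (Filter.Tendsto.const_add _ (continuous_id.tendsto 0)).mul_const c
      simpa using this.mono_left nhdsWithin_le_nhds
    refine le_of_tendsto hlim ?_
    filter_upwards [self_mem_nhdsWithin] with s hs
    have hmem : (x, f x + s) ∈ S := by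
      simp only [hS, Set.mem_setOf_eq]
      linarith [Set.mem_Ioi.mp hs]
    have h2 := hL _ hmem
    rw [hdecomp x (f x + s), hdecomp x₀ (f x₀)] at h2
    linarith
  set d0 : ℝ := -c with hd0
  have hd0pos : 0 < d0 := by simp [hd0]; linarith
  set L1 : (Fin d → ℝ) →ₗ[ℝ] ℝ :=
    (L.toLinearMap).comp (LinearMap.inl ℝ (Fin d → ℝ) ℝ) with hL1
  have hL1eq : ∀ x : Fin d → ℝ, L (x, 0) = L1 x := by intro x; simp [hL1]
  have hsum : ∀ x : Fin d → ℝ,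
      (∑ j, (L1 (fun k => if j = k then 1 else 0) / d0) * x j) = L1 x / d0 := by
    intro x
    rw [L1.pi_apply_eq_sum_univ x, Finset.sum_div]
    refine Finset.sum_congr rfl fun j _ => ?_
    rw [smul_eq_mul]; ring
  refine ⟨fun j => L1 (fun k => if j = k then 1 else 0) / d0,
    f x₀ - L1 x₀ / d0, ?_, ?_⟩
  · intro x
    rw [hsum]
    have hk := hkey x
    rw [hL1eq, hL1eq] at hk
    have h1 : L1 x - L1 x₀ ≤ (f x - f x₀) * d0 := by
      simp only [hd0]; nlinarith
    have h2 : (L1 x - L1 x₀) / d0 ≤ f x - f x₀ :=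
      (div_le_iff₀ hd0pos).mpr h1
    rw [sub_div] at h2
    linarith
  · rw [hsum]; ring

/-- Any convex function `f : ℝ^d → ℝ` can be approximated from below,
uniformly within `ε` on any compact set `C`, by a max-affine function
`x ↦ max_{1 ≤ i ≤ M} (⟨A_i, x⟩ + b_i)` built from finitely many cuts. -/
theorem maxAffine_approx_convex_on_compact {d : ℕ}
    (f : (Fin d → ℝ) → ℝ) (hf : ConvexOn ℝ Set.univ f)
    (C : Set (Fin d → ℝ)) (hC : IsCompact C)
    (ε : ℝ) (hε : 0 < ε) :
    ∃ (M : ℕ) (A : Fin (M + 1) → (Fin d → ℝ)) (b : Fin (M + 1) → ℝ),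
      (∀ x ∈ C, (⨆ i : Fin (M + 1), ((∑ j, A i j * x j) + b i)) ≤ f x) ∧
      (∀ x ∈ C, f x - (⨆ i : Fin (M + 1), ((∑ j, A i j * x j) + b i)) ≤ ε) := by
  rcases C.eq_empty_or_nonempty with rfl | ⟨y₀, hy₀⟩
  · exact ⟨0, fun _ _ => 0, fun _ => 0, by simp, by simp⟩
  have hcont : Continuous f := hf.locallyLipschitz.continuous
  choose Ay by_ hle heq using exists_affine_minorant f hf
  -- open cover
  set U : (Fin d → ℝ) → Set (Fin d → ℝ) :=
    fun y => {x | f x - ((∑ j, Ay y j * x j) + by_ y) < ε} with hU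
  have hUopen : ∀ y, IsOpen (U y) := by
    intro y
    have hca : Continuous fun x : Fin d → ℝ => f x - ((∑ j, Ay y j * x j) + by_ y) := by
      apply hcont.sub
      apply Continuous.add _ continuous_const
      exact continuous_finset_sum _ fun j _ => (continuous_const.mul (continuous_apply j))
    exact isOpen_lt hca continuous_const
  have hcover : C ⊆ ⋃ y ∈ C, U y := by
    intro x hx
    refine Set.mem_biUnion hx ?_
    simp only [hU, Set.mem_setOf_eq, heq x]
    linarith
  obtain ⟨t, hts, hfin, htcover⟩ :=
    hC.elim_finite_subcover_image (fun y _ => hUopen y) hcover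
  have htne : t.Nonempty := by
    rcases Set.mem_iUnion₂.mp (htcover hy₀) with ⟨y, hy, _⟩
    exact ⟨y, hy⟩
  lift t to Finset (Fin d → ℝ) using hfin with t ht
  have htne' : t.Nonempty := by
    obtain ⟨y, hy⟩ := htne; exact ⟨y, by simpa using hy⟩
  obtain ⟨M, hM⟩ : ∃ M, t.card = M + 1 :=
    Nat.exists_eq_succ_of_ne_zero (Finset.card_pos.mpr htne').ne'
  set e : Fin (M + 1) ≃ {x // x ∈ t} := (finCongr hM.symm).trans t.equivFin.symm with he
  refine ⟨M, fun i => Ay (e i).1, fun i => by_ (e i).1, ?_, ?_⟩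
  · intro x hx
    apply ciSup_le
    intro i
    exact hle (e i).1 x
  · intro x hx
    rcases Set.mem_iUnion₂.mp (htcover hx) with ⟨y, hy, hxy⟩
    have hyt : y ∈ t := by simpa using hy
    have hbdd : BddAbove (Set.range fun i : Fin (M + 1) =>
        (∑ j, Ay (e i).1 j * x j) + by_ (e i).1) := Set.Finite.bddAbove (Set.finite_range _)
    have hle' : (∑ j, Ay y j * x j) + by_ y ≤
        ⨆ i : Fin (M + 1), ((∑ j, Ay (e i).1 j * x j) + by_ (e i).1) := by
      have := le_ciSup hbdd (e.symm ⟨y, hyt⟩)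
      simpa using this
    have hxy' : f x - ((∑ j, Ay y j * x j) + by_ y) < ε := hxy
    linarith
end

section
/- Let q ≥ 2, G ≥ 1, K ≥ 1, M = K·G, and consider the GroupMax network h^θ : ℝ^d → ℝ defined by z¹ = ρ(A¹x + B¹), z^i = ρ((A^i)⁺ z^{i−1} + B^i) for 1 < i < q, and h^θ(x) = max_{1 ≤ m ≤ M} ((A^q)⁺ z^{q−1} + B^q)_m, where A¹ ∈ ℝ^{M×d}, A^j ∈ ℝ^{M×K} for 2 ≤ j ≤ q, B^j ∈ ℝ^M, (·)⁺ is the entrywise positive part, and ρ : ℝ^M → ℝ^K is the group-max activation. Then h^θ is the pointwise maximum of finitely many affine functions of x; in particular there exist N ≤ M·G^{K(q−1)} vectors C_1, …, C_N ∈ ℝ^d and scalars c_1, …, c_N such that h^θ(x) = max_{1 ≤ n ≤ N} (⟨C_n, x⟩ + c_n) for all x ∈ ℝ^d. Consequently h^θ is convex. -/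
/-- Index `k*G + l`: the `l`-th element of the `k`-th group of `G` consecutive
coordinates among `K * G` coordinates. -/
def groupIdx {K G : ℕ} (k : Fin K) (l : Fin G) : Fin (K * G) :=
  finProdFinEquiv (k, l)

/-- The GroupMax activation `ρ : ℝ^{K·G} → ℝ^K`:
`ρ(v)_k = max (v_{kG+1}, …, v_{kG+G})`, the max over the `k`-th group of `G`
consecutive coordinates. -/
noncomputable def groupMaxAct {K G : ℕ} (v : Fin (K * G) → ℝ) : Fin K → ℝ :=
  fun k => ⨆ l : Fin G, v (groupIdx k l)

/-- Entrywise positive part `(A)⁺` of a real matrix. -/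
def matPos {m n : Type*} (A : Matrix m n ℝ) : Matrix m n ℝ :=
  fun i j => max (A i j) 0

/-- Hidden layers of the GroupMax network, with per-layer group counts `K j` and
group sizes `G j` (layer `j+1` of the paper has `K j * G j` neurons):
`gmZ K G A1 A B x 0 = z¹ = ρ(A¹ x + B¹)` and
`gmZ K G A1 A B x (j+1) = z^{j+2} = ρ((A^{j+2})⁺ z^{j+1} + B^{j+2})`. -/
noncomputable def gmZ {d : ℕ} (K G : ℕ → ℕ)
    (A1 : Matrix (Fin (K 0 * G 0)) (Fin d) ℝ)
    (A : (j : ℕ) → Matrix (Fin (K (j + 1) * G (j + 1))) (Fin (K j)) ℝ)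
    (B : (j : ℕ) → Fin (K j * G j) → ℝ)
    (x : Fin d → ℝ) : (j : ℕ) → Fin (K j) → ℝ
  | 0 => groupMaxAct (fun m => A1.mulVec x m + B 0 m)
  | j + 1 => groupMaxAct
      (fun m => (matPos (A j)).mulVec (gmZ K G A1 A B x j) m + B (j + 1) m)

/-- The `q`-layer GroupMax network: hidden layers `z¹, …, z^{q-1}` given by `gmZ`
(so `z^{q-1} = gmZ … (q-2)`), and output
`h^θ(x) = max_{1 ≤ m ≤ Mq} ((A^q)⁺ z^{q-1} + B^q)_m`. -/
noncomputable def groupMaxNet {d : ℕ} (q : ℕ) (K G : ℕ → ℕ) (Mq : ℕ)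
    (A1 : Matrix (Fin (K 0 * G 0)) (Fin d) ℝ)
    (A : (j : ℕ) → Matrix (Fin (K (j + 1) * G (j + 1))) (Fin (K j)) ℝ)
    (B : (j : ℕ) → Fin (K j * G j) → ℝ)
    (Aq : Matrix (Fin Mq) (Fin (K (q - 2))) ℝ) (Bq : Fin Mq → ℝ)
    (x : Fin d → ℝ) : ℝ :=
  ⨆ m : Fin Mq, ((matPos Aq).mulVec (gmZ K G A1 A B x (q - 2)) m + Bq m)

/-! A nonnegative combination `∑ₖ aₖ ρ(v)ₖ + b` of GroupMax outputs is the maximum, over the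
`G^K` ways `l` of picking one coordinate in each group, of `∑ₖ aₖ v_{k,l(k)} + b`. When
`v = (A)⁺ z + B`, this inner term is again a nonnegative combination of the previous layer `z`,
since `(A)⁺ ≥ 0`. Tracking nonnegative combinations of a whole layer (rather than single
neurons) therefore multiplies the number of affine pieces by only `G^K` per layer, and the output,
a maximum of `M` such combinations of `z^{q-1}`, is a maximum of `M·G^{K(q-1)}` affine functions.
A finite maximum of affine functions is convex. -/

open Matrix

section MaxAffine

variable {n ι : Type*} [Fintype n]

def IsMaxAffine (ι : Type*) (f : (n → ℝ) → ℝ) : Prop :=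
  ∃ (C : ι → n → ℝ) (c : ι → ℝ), ∀ x, f x = ⨆ i, (C i ⬝ᵥ x + c i)

theorem IsMaxAffine.reindex {ι' : Type*} {f : (n → ℝ) → ℝ} (e : ι ≃ ι')
    (hf : IsMaxAffine ι f) : IsMaxAffine ι' f := by
  obtain ⟨C, c, hC⟩ := hf
  exact ⟨C ∘ e.symm, c ∘ e.symm, fun x => by rw [hC x, ← e.symm.surjective.iSup_comp]; rfl⟩

theorem IsMaxAffine.iSup {μ : Type*} [Finite μ] [Finite ι] {f : μ → (n → ℝ) → ℝ}
    (hf : ∀ m, IsMaxAffine ι (f m)) : IsMaxAffine (μ × ι) (fun x => ⨆ m, f m x) := by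
  choose C c hC using hf
  exact ⟨fun p => C p.1 p.2, fun p => c p.1 p.2, fun x => by
    simp only [hC _ x, Finite.ciSup_prod]⟩

theorem IsMaxAffine.convexOn [Finite ι] {f : (n → ℝ) → ℝ} (hf : IsMaxAffine ι f) :
    ConvexOn ℝ Set.univ f := by
  obtain ⟨C, c, rfl⟩ : ∃ (C : ι → n → ℝ) (c : ι → ℝ), f = fun x => ⨆ i, (C i ⬝ᵥ x + c i) := by
    obtain ⟨C, c, hC⟩ := hf
    exact ⟨C, c, funext hC⟩
  rcases isEmpty_or_nonempty ι
  · simpa only [Real.iSup_of_isEmpty] using convexOn_const (0 : ℝ) convex_univ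
  refine ⟨convex_univ, ?_⟩
  intro x _ y _ s t hs ht hst
  simp only [smul_eq_mul]
  refine ciSup_le fun i => ?_
  have affine : C i ⬝ᵥ (s • x + t • y) + c i
      = s * (C i ⬝ᵥ x + c i) + t * (C i ⬝ᵥ y + c i) := by
    rw [dotProduct_add, dotProduct_smul, dotProduct_smul, smul_eq_mul, smul_eq_mul]
    linear_combination c i * hst.symm
  rw [affine]
  gcongr <;> exact Finite.le_ciSup (fun i => C i ⬝ᵥ _ + c i) i

end MaxAffine

theorem Real.sum_ciSup_eq_ciSup_sum {κ ι : Type*} [Fintype κ] [Finite ι] [Nonempty ι]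
    (g : κ → ι → ℝ) : ∑ k, ⨆ i, g k i = ⨆ l : κ → ι, ∑ k, g k (l k) := by
  choose L hL using fun k => exists_eq_ciSup_of_finite (f := g k)
  refine le_antisymm ?_ (ciSup_le fun l => Finset.sum_le_sum fun k _ => Finite.le_ciSup _ _)
  calc ∑ k, ⨆ i, g k i = ∑ k, g k (L k) := by simp only [hL]
    _ ≤ ⨆ l : κ → ι, ∑ k, g k (l k) := Finite.le_ciSup (fun l : κ → ι => ∑ k, g k (l k)) L

theorem sum_mul_dotProduct_add {κ n : Type*} [Fintype κ] [Fintype n] (a : κ → ℝ)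
    (r : κ → n → ℝ) (β : κ → ℝ) (b : ℝ) (y : n → ℝ) :
    ∑ k, a k * (r k ⬝ᵥ y + β k) + b = (∑ k, a k • r k) ⬝ᵥ y + (∑ k, a k * β k + b) := by
  simp only [mul_add, Finset.sum_add_distrib, sum_dotProduct, smul_dotProduct, smul_eq_mul]
  ring

section GroupMax

variable {K G : ℕ} [NeZero G] {n κ ι : Type*} [Fintype n] [Fintype κ]

theorem dotProduct_groupMaxAct_add {a : Fin K → ℝ} (ha : 0 ≤ a) (b : ℝ)
    (R : Matrix (Fin (K * G)) κ ℝ) (β : Fin (K * G) → ℝ) (y : κ → ℝ) :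
    a ⬝ᵥ groupMaxAct (R *ᵥ y + β) + b
      = ⨆ l : Fin K → Fin G, ((∑ k, a k • R (groupIdx k (l k))) ⬝ᵥ y
          + (∑ k, a k * β (groupIdx k (l k)) + b)) := by
  have hsum : a ⬝ᵥ groupMaxAct (R *ᵥ y + β)
      = ⨆ l : Fin K → Fin G, ∑ k, a k * (R (groupIdx k (l k)) ⬝ᵥ y + β (groupIdx k (l k))) := by
    simp only [dotProduct, groupMaxAct, Real.mul_iSup_of_nonneg (ha _)]
    exact Real.sum_ciSup_eq_ciSup_sum _
  rw [hsum, Finite.map_iSup_of_monotone _ (add_left_mono (a := b))]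
  simp only [sum_mul_dotProduct_add]

def NonnegCombMaxAffine (ι : Type*) (u : (n → ℝ) → κ → ℝ) : Prop :=
  ∀ a : κ → ℝ, 0 ≤ a → ∀ b : ℝ, IsMaxAffine ι (fun x => a ⬝ᵥ u x + b)

theorem NonnegCombMaxAffine.reindex {ι' : Type*} {u : (n → ℝ) → κ → ℝ} (e : ι ≃ ι')
    (hu : NonnegCombMaxAffine ι u) : NonnegCombMaxAffine ι' u :=
  fun a ha b => (hu a ha b).reindex e

theorem nonnegCombMaxAffine_groupMaxAct_input (R : Matrix (Fin (K * G)) n ℝ)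
    (β : Fin (K * G) → ℝ) :
    NonnegCombMaxAffine (Fin K → Fin G) (fun x => groupMaxAct (R *ᵥ x + β)) :=
  fun _ ha b => ⟨_, _, fun x => dotProduct_groupMaxAct_add ha b R β x⟩

theorem NonnegCombMaxAffine.groupMaxAct_matPos [Finite ι] {u : (n → ℝ) → κ → ℝ}
    (hu : NonnegCombMaxAffine ι u) (W : Matrix (Fin (K * G)) κ ℝ) (β : Fin (K * G) → ℝ) :
    NonnegCombMaxAffine ((Fin K → Fin G) × ι)
      (fun x => groupMaxAct (matPos W *ᵥ u x + β)) := by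
  intro a ha b
  simp only [dotProduct_groupMaxAct_add ha b]
  refine IsMaxAffine.iSup fun l => hu _ ?_ _
  exact Finset.sum_nonneg fun k _ => smul_nonneg (ha k) fun _ => le_max_right _ _

end GroupMax

theorem nonnegCombMaxAffine_gmZ {d K G : ℕ} [NeZero G] (A1 : Matrix (Fin (K * G)) (Fin d) ℝ)
    (A : ℕ → Matrix (Fin (K * G)) (Fin K) ℝ) (B : ℕ → Fin (K * G) → ℝ) (j : ℕ) :
    NonnegCombMaxAffine (Fin (j + 1) → Fin K → Fin G)
      (fun x => gmZ (fun _ => K) (fun _ => G) A1 A B x j) := by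
  induction j with
  | zero =>
    exact (nonnegCombMaxAffine_groupMaxAct_input A1 (B 0)).reindex
      (Equiv.funUnique (Fin 1) _).symm
  | succ j ih =>
    exact (ih.groupMaxAct_matPos (A j) (B (j + 1))).reindex (Fin.consEquiv _)

/-- The `q`-layer GroupMax network (constant width `M = K·G`,
group size `G`) is a pointwise maximum of finitely many affine functions: there
are `N ≤ M·G^{K(q-1)}` cuts `(C_n, c_n)` with
`h^θ(x) = max_{1 ≤ n ≤ N} (⟨C_n, x⟩ + c_n)` for all `x`; in particular `h^θ` is
convex. -/
theorem groupMaxNet_is_maxAffine {d : ℕ} (G K q : ℕ) (hG : 1 ≤ G) (hK : 1 ≤ K)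
    (hq : 2 ≤ q)
    (A1 : Matrix (Fin (K * G)) (Fin d) ℝ)
    (A : ℕ → Matrix (Fin (K * G)) (Fin K) ℝ)
    (B : ℕ → Fin (K * G) → ℝ)
    (Aq : Matrix (Fin (K * G)) (Fin K) ℝ) (Bq : Fin (K * G) → ℝ) :
    ∃ (N : ℕ) (_ : 1 ≤ N) (C : Fin N → (Fin d → ℝ)) (c : Fin N → ℝ),
      N ≤ K * G * G ^ (K * (q - 1)) ∧
      (∀ x, groupMaxNet q (fun _ => K) (fun _ => G) (K * G) A1 A B Aq Bq x
          = ⨆ n : Fin N, ((∑ j, C n j * x j) + c n)) ∧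
      ConvexOn ℝ Set.univ
        (groupMaxNet q (fun _ => K) (fun _ => G) (K * G) A1 A B Aq Bq) := by
  have : NeZero G := ⟨by omega⟩
  have : NeZero K := ⟨by omega⟩
  have hnet : IsMaxAffine (Fin (K * G) × (Fin (q - 2 + 1) → Fin K → Fin G))
      (groupMaxNet q (fun _ => K) (fun _ => G) (K * G) A1 A B Aq Bq) :=
    IsMaxAffine.iSup fun m =>
      nonnegCombMaxAffine_gmZ A1 A B (q - 2) _ (fun _ => le_max_right _ _) (Bq m)
  have hcard : Fintype.card (Fin (K * G) × (Fin (q - 2 + 1) → Fin K → Fin G))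
      = K * G * G ^ (K * (q - 1)) := by
    simp only [Fintype.card_prod, Fintype.card_fun, Fintype.card_fin, ← pow_mul,
      show q - 2 + 1 = q - 1 by omega]
  obtain ⟨C, c, hC⟩ := hnet.reindex (Fintype.equivFin _)
  exact ⟨_, Fintype.card_pos, C, c, hcard.le, hC, hnet.convexOn⟩
end
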